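/- arXiv:1906.11468 — 3 statements merged into one kernel-verified Lean document; each statement's English description precedes it below -/
import Mathlib

section
/- Let H be a finite set closed under an involution w ↦ w^{-1} containing a fixed element d, let R be a commutative ring, and let h : H × H × H → R and γ : H × H × H → R be functions satisfying: (i) ∑_{z} h(x₁,x₂,z)·γ(z,x₃,y^{-1}) = ∑_{z} h(x₁,z,y)·γ(x₂,x₃,z^{-1}) for all x₁,x₂,x₃,y; (ii) h(a,b,c) = h(b^{-1},a^{-1},c^{-1}) and γ(a,b,c) = γ(b^{-1},a^{-1},c^{-1}) and γ(a,b,c) = γ(c,a,b); and (iii) γ(v,u,d) = δ_{v,u^{-1}}. Then for all w,x,u ∈ H: ∑_{v ∈ H} h(x^{-1}, v, d) · γ(w, v, u^{-1}) = h(w, x, u). -/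
/-- the key identity ∑_v h(x⁻¹,v,d)·γ(w,v,u⁻¹) = h(w,x,u)
derived from Lusztig's axioms. -/
theorem stmt_2 {H : Type*} [Fintype H] [DecidableEq H] {R : Type*} [CommRing R]
    (inv : H → H) (hinv : ∀ w, inv (inv w) = w) (d : H)
    (h γ : H → H → H → R)
    (hLu : ∀ x1 x2 x3 y, ∑ z, h x1 x2 z * γ z x3 (inv y)
        = ∑ z, h x1 z y * γ x2 x3 (inv z))
    (hsymh : ∀ a b c, h a b c = h (inv b) (inv a) (inv c))
    (hsymγ : ∀ a b c, γ a b c = γ (inv b) (inv a) (inv c))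
    (hcyc : ∀ a b c, γ a b c = γ c a b)
    (hdel : ∀ v u, γ v u d = if v = inv u then 1 else 0) :
    ∀ w x u, ∑ v, h (inv x) v d * γ w v (inv u) = h w x u := by
  intro w x u
  have hγd : ∀ z, γ z u (inv d) = if z = inv u then 1 else 0 := by
    intro z
    rw [hsymγ, hinv, hdel, hinv]
    simp [eq_comm]
  have key := hLu (inv x) (inv w) u d
  have hl : ∑ z, h (inv x) (inv w) z * γ z u (inv d) = h w x u := by
    rw [Finset.sum_congr rfl (fun z _ => by rw [hγd z])]
    simp only [mul_ite, mul_one, mul_zero]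
    rw [Finset.sum_ite_eq' Finset.univ (inv u) (fun z => h (inv x) (inv w) z)]
    simp [← hsymh w x u]
  have hr : ∑ z, h (inv x) z d * γ (inv w) u (inv z)
      = ∑ v, h (inv x) v d * γ w v (inv u) := by
    refine Finset.sum_congr rfl (fun z _ => ?_)
    rw [hsymγ (inv w) u (inv z), hinv, hinv, hcyc, hcyc]
  rw [← hl, key, hr]
end

section
/- Let B be a finite-dimensional ℂ-algebra with complete orthogonal idempotents {e_x}_{x ∈ H} and a trace tr : B → ℂ making B a Frobenius algebra, such that the Nakayama automorphism σ fixes every e_x (so tr(e_x b e_y) = 0 whenever x ≠ y). Let M := ⊕_x B e_x ⊗ e_x B with the coalgebra structure δ_M(e_x ⊗ e_x) = δ(x)(e_x ⊗ e_x)⊗(e_x ⊗ e_x), ε_M(a e_x ⊗ e_x b) = δ(x)^{-1} a e_x b, and define μ_M : M ⊗_B M → M by (e_x ⊗ e_x a e_y) ⊗ (e_y ⊗ e_y) ↦ δ_{xy} μ(x) tr(a) e_x ⊗ e_x, and ι_M : B → M by e_u ↦ ∑_{v} μ(v)^{-1} ∑_i b^{i,u,v} ⊗ b_{i,v,u}, where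 {b_{i,v,u}} and {b^{i,u,v}} are dual bases of e_v B e_u and e_u B e_v with respect to tr, and μ(x) ∈ ℂ^× are arbitrary fixed scalars. Then (M, μ_M, ι_M, δ_M, ε_M) is a Frobenius algebra object in the monoidal category of B-B-bimodules. -/
open scoped TensorProduct

noncomputable section

namespace Stmt15

variable (H B : Type) [Fintype H] [DecidableEq H] [Ring B] [Algebra ℂ B]

/-- The ambient space whose slot `x` is supposed to contain `B e_x ⊗ e_x B`;
the bimodule `M = ⊕_x B e_x ⊗ e_x B` is the set of fixed points of `proj`. -/
abbrev T1 := H → B ⊗[ℂ] B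

/-- Concrete model of `M ⊗_B M = ⊕_{x,y} B e_x ⊗ (e_x B e_y) ⊗ e_y B`. -/
abbrev T2 := H → H → B ⊗[ℂ] (B ⊗[ℂ] B)

/-- Concrete model of `M ⊗_B M ⊗_B M`. -/
abbrev T3 := H → H → H → B ⊗[ℂ] (B ⊗[ℂ] (B ⊗[ℂ] B))

variable {H B}

/-- Projection of the ambient space onto the intended bimodule
`M = ⊕_x B e_x ⊗ e_x B`. -/
def proj (e : H → B) : T1 H B →ₗ[ℂ] T1 H B :=
  LinearMap.pi fun x =>
    (TensorProduct.map (LinearMap.mulRight ℂ (e x)) (LinearMap.mulLeft ℂ (e x))).comp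
      (LinearMap.proj x)

/-- Left action of `B` on `M`. -/
def lact (b : B) : T1 H B →ₗ[ℂ] T1 H B :=
  LinearMap.pi fun x =>
    (TensorProduct.map (LinearMap.mulLeft ℂ b) LinearMap.id).comp (LinearMap.proj x)

/-- Right action of `B` on `M`. -/
def ract (b : B) : T1 H B →ₗ[ℂ] T1 H B :=
  LinearMap.pi fun x =>
    (TensorProduct.map LinearMap.id (LinearMap.mulRight ℂ b)).comp (LinearMap.proj x)

/-- Left action of `B` on `M ⊗_B M`. -/
def lact2 (b : B) : T2 H B →ₗ[ℂ] T2 H B :=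
  LinearMap.pi fun x => LinearMap.pi fun y =>
    TensorProduct.map (LinearMap.mulLeft ℂ b) LinearMap.id ∘ₗ
      LinearMap.proj y ∘ₗ LinearMap.proj x

/-- Right action of `B` on `M ⊗_B M`. -/
def ract2 (b : B) : T2 H B →ₗ[ℂ] T2 H B :=
  LinearMap.pi fun x => LinearMap.pi fun y =>
    TensorProduct.map LinearMap.id
        (TensorProduct.map LinearMap.id (LinearMap.mulRight ℂ b)) ∘ₗ
      LinearMap.proj y ∘ₗ LinearMap.proj x

/-- Insertion of `e x` in the middle: `a ⊗ b ↦ a ⊗ (e x ⊗ b)`. -/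
def ins (e : H → B) (x : H) : B ⊗[ℂ] B →ₗ[ℂ] B ⊗[ℂ] (B ⊗[ℂ] B) :=
  TensorProduct.map LinearMap.id (TensorProduct.mk ℂ B B (e x))

/-- The comultiplication `δ_M : M → M ⊗_B M`,
`a e_x ⊗ e_x b ↦ δ(x)·(a e_x ⊗ e_x) ⊗ (e_x ⊗ e_x b)`, in the concrete model. -/
def comul (e : H → B) (ds : H → ℂ) : T1 H B →ₗ[ℂ] T2 H B :=
  LinearMap.pi fun x => LinearMap.pi fun y =>
    if x = y then (ds x • ins e x).comp (LinearMap.proj x) else 0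

/-- The counit `ε_M : M → B`, `a e_x ⊗ e_x b ↦ δ(x)⁻¹ a e_x b`. -/
def counit (ds : H → ℂ) : T1 H B →ₗ[ℂ] B :=
  ∑ x, (ds x)⁻¹ • ((LinearMap.mul' ℂ B).comp (LinearMap.proj x))

/-- Multiplication of the first two tensor factors. -/
def mulPair12 : B ⊗[ℂ] (B ⊗[ℂ] B) →ₗ[ℂ] B ⊗[ℂ] B :=
  (TensorProduct.map (LinearMap.mul' ℂ B) LinearMap.id).comp
    (TensorProduct.assoc ℂ B B B).symm.toLinearMap

/-- Multiplication of the last two tensor factors. -/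
def mulPair23 : B ⊗[ℂ] (B ⊗[ℂ] B) →ₗ[ℂ] B ⊗[ℂ] B :=
  TensorProduct.map LinearMap.id (LinearMap.mul' ℂ B)

/-- The map `ε_M ⊗_B id_M : M ⊗_B M → M` in the concrete model. -/
def counitL (ds : H → ℂ) : T2 H B →ₗ[ℂ] T1 H B :=
  LinearMap.pi fun y =>
    ∑ x, (ds x)⁻¹ • (mulPair12 (B := B) ∘ₗ
      LinearMap.proj y ∘ₗ LinearMap.proj x)

/-- The map `id_M ⊗_B ε_M : M ⊗_B M → M` in the concrete model. -/
def counitR (ds : H → ℂ) : T2 H B →ₗ[ℂ] T1 H B :=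
  LinearMap.pi fun x =>
    ∑ y, (ds y)⁻¹ • (mulPair23 (B := B) ∘ₗ
      LinearMap.proj y ∘ₗ LinearMap.proj x)

/-- Insertion of `e x` in the second position of a triple tensor. -/
def ins1 (e : H → B) (x : H) :
    B ⊗[ℂ] (B ⊗[ℂ] B) →ₗ[ℂ] B ⊗[ℂ] (B ⊗[ℂ] (B ⊗[ℂ] B)) :=
  TensorProduct.map LinearMap.id (TensorProduct.mk ℂ B (B ⊗[ℂ] B) (e x))

/-- Insertion of `e y` in the third position of a triple tensor. -/
def ins2 (e : H → B) (y : H) :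
    B ⊗[ℂ] (B ⊗[ℂ] B) →ₗ[ℂ] B ⊗[ℂ] (B ⊗[ℂ] (B ⊗[ℂ] B)) :=
  TensorProduct.map LinearMap.id
    (TensorProduct.map LinearMap.id (TensorProduct.mk ℂ B B (e y)))

/-- The map `δ_M ⊗_B id_M : M ⊗_B M → M ⊗_B M ⊗_B M` in the concrete model. -/
def comulL (e : H → B) (ds : H → ℂ) : T2 H B →ₗ[ℂ] T3 H B :=
  LinearMap.pi fun x => LinearMap.pi fun x' => LinearMap.pi fun y =>
    if x = x' then (ds x • ins1 e x) ∘ₗ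
      LinearMap.proj y ∘ₗ LinearMap.proj x else 0

/-- The map `id_M ⊗_B δ_M : M ⊗_B M → M ⊗_B M ⊗_B M` in the concrete model. -/
def comulR (e : H → B) (ds : H → ℂ) : T2 H B →ₗ[ℂ] T3 H B :=
  LinearMap.pi fun x => LinearMap.pi fun y => LinearMap.pi fun y' =>
    if y = y' then (ds y • ins2 e y) ∘ₗ
      LinearMap.proj y ∘ₗ LinearMap.proj x else 0


/-- Collapse the middle factor of a triple tensor via the trace:
`a ⊗ (c ⊗ b) ↦ tr(c) • (a ⊗ b)`. -/
def trPair12 (tr : B →ₗ[ℂ] ℂ) : B ⊗[ℂ] (B ⊗[ℂ] B) →ₗ[ℂ] B ⊗[ℂ] B :=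
  TensorProduct.map LinearMap.id
    ((TensorProduct.lid ℂ B).toLinearMap ∘ₗ TensorProduct.map tr LinearMap.id)

/-- The multiplication `μ_M : M ⊗_B M → M`,
`(e_x ⊗ e_x a e_y) ⊗ (e_y ⊗ e_y) ↦ δ_{xy} μ(x) tr(a) e_x ⊗ e_x`,
in the concrete model. -/
def mul (tr : B →ₗ[ℂ] ℂ) (ms : H → ℂ) : T2 H B →ₗ[ℂ] T1 H B :=
  LinearMap.pi fun x =>
    (ms x • trPair12 (B := B) tr) ∘ₗ LinearMap.proj x ∘ₗ LinearMap.proj x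

/-- Trace collapse of the second factor of a quadruple tensor. -/
def trQuad2 (tr : B →ₗ[ℂ] ℂ) :
    B ⊗[ℂ] (B ⊗[ℂ] (B ⊗[ℂ] B)) →ₗ[ℂ] B ⊗[ℂ] (B ⊗[ℂ] B) :=
  TensorProduct.map LinearMap.id
    ((TensorProduct.lid ℂ (B ⊗[ℂ] B)).toLinearMap ∘ₗ
      TensorProduct.map tr LinearMap.id)

/-- Trace collapse of the third factor of a quadruple tensor. -/
def trQuad3 (tr : B →ₗ[ℂ] ℂ) :
    B ⊗[ℂ] (B ⊗[ℂ] (B ⊗[ℂ] B)) →ₗ[ℂ] B ⊗[ℂ] (B ⊗[ℂ] B) :=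
  TensorProduct.map LinearMap.id
    (TensorProduct.map LinearMap.id
      ((TensorProduct.lid ℂ B).toLinearMap ∘ₗ TensorProduct.map tr LinearMap.id))

/-- The map `μ_M ⊗_B id_M : M ⊗_B M ⊗_B M → M ⊗_B M` in the concrete model. -/
def mulL (tr : B →ₗ[ℂ] ℂ) (ms : H → ℂ) : T3 H B →ₗ[ℂ] T2 H B :=
  LinearMap.pi fun x => LinearMap.pi fun z =>
    (ms x • trQuad2 (B := B) tr) ∘ₗ
      LinearMap.proj z ∘ₗ LinearMap.proj x ∘ₗ LinearMap.proj x

/-- The map `id_M ⊗_B μ_M : M ⊗_B M ⊗_B M → M ⊗_B M` in the concrete model. -/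
def mulR (tr : B →ₗ[ℂ] ℂ) (ms : H → ℂ) : T3 H B →ₗ[ℂ] T2 H B :=
  LinearMap.pi fun x => LinearMap.pi fun y =>
    (ms y • trQuad3 (B := B) tr) ∘ₗ
      LinearMap.proj y ∘ₗ LinearMap.proj y ∘ₗ LinearMap.proj x

variable [Fintype H] [DecidableEq H]

/-- The unit `ι_M : B → M`,
`e_u ↦ ∑_v μ(v)⁻¹ ∑_i b^{i,u,v} ⊗ b_{i,v,u}` (extended as a bimodule map). -/
def unit (ms : H → ℂ) (m : H → H → ℕ) (bb Bb : ∀ u v : H, Fin (m u v) → B) :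
    B →ₗ[ℂ] T1 H B :=
  LinearMap.pi fun v => ∑ u, ∑ i : Fin (m u v), (ms v)⁻¹ •
    (((TensorProduct.mk ℂ B B).flip (bb u v i)) ∘ₗ LinearMap.mulRight ℂ (Bb u v i))

/-- The map `ι_M ⊗_B id_M : M ≅ B ⊗_B M → M ⊗_B M` in the concrete model. -/
def unitL (ms : H → ℂ) (m : H → H → ℕ) (bb Bb : ∀ u v : H, Fin (m u v) → B) :
    T1 H B →ₗ[ℂ] T2 H B :=
  LinearMap.pi fun v => LinearMap.pi fun x => ∑ u, ∑ i : Fin (m u v), (ms v)⁻¹ •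
    ((TensorProduct.mk ℂ B (B ⊗[ℂ] B) (Bb u v i)) ∘ₗ
      TensorProduct.map (LinearMap.mulLeft ℂ (bb u v i)) LinearMap.id ∘ₗ
      LinearMap.proj x)

/-- The map `id_M ⊗_B ι_M : M ≅ M ⊗_B B → M ⊗_B M` in the concrete model. -/
def unitR (ms : H → ℂ) (m : H → H → ℕ) (bb Bb : ∀ u v : H, Fin (m u v) → B) :
    T1 H B →ₗ[ℂ] T2 H B :=
  LinearMap.pi fun x => LinearMap.pi fun v => ∑ u, ∑ i : Fin (m u v), (ms v)⁻¹ •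
    (TensorProduct.map LinearMap.id
        (((TensorProduct.mk ℂ B B).flip (bb u v i)) ∘ₗ
          LinearMap.mulRight ℂ (Bb u v i)) ∘ₗ
      LinearMap.proj x)

set_option linter.unusedSectionVars false
set_option synthInstance.maxHeartbeats 1000000
set_option maxHeartbeats 1000000

section Aux

open TensorProduct LinearMap

/-! ### Evaluation lemmas for the structure maps -/

lemma mul_apply' (tr : B →ₗ[ℂ] ℂ) (ms : H → ℂ) (n : T2 H B) (x : H) :
    mul tr ms n x = ms x • trPair12 tr (n x x) := rfl

lemma mulL_apply' (tr : B →ₗ[ℂ] ℂ) (ms : H → ℂ) (n : T3 H B) (x z : H) :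
    mulL tr ms n x z = ms x • trQuad2 tr (n x x z) := rfl

lemma mulR_apply' (tr : B →ₗ[ℂ] ℂ) (ms : H → ℂ) (n : T3 H B) (x y : H) :
    mulR tr ms n x y = ms y • trQuad3 tr (n x y y) := rfl

lemma comul_apply' (e : H → B) (ds : H → ℂ) (mm : T1 H B) (x y : H) :
    comul e ds mm x y = if x = y then ds x • ins e x (mm x) else 0 := by
  rcases eq_or_ne x y with h | h <;> simp [comul, h]

lemma comulL_apply' (e : H → B) (ds : H → ℂ) (n : T2 H B) (x x' y : H) :
    comulL e ds n x x' y = if x = x' then ds x • ins1 e x (n x y) else 0 := by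
  rcases eq_or_ne x x' with h | h <;> simp [comulL, h]

lemma comulR_apply' (e : H → B) (ds : H → ℂ) (n : T2 H B) (x y y' : H) :
    comulR e ds n x y y' = if y = y' then ds y • ins2 e y (n x y) else 0 := by
  rcases eq_or_ne y y' with h | h <;> simp [comulR, h]

lemma counitL_apply' (ds : H → ℂ) (n : T2 H B) (y : H) :
    counitL ds n y = ∑ x, (ds x)⁻¹ • mulPair12 (B := B) (n x y) := by
  simp [counitL, LinearMap.sum_apply]

lemma counitR_apply' (ds : H → ℂ) (n : T2 H B) (x : H) :
    counitR ds n x = ∑ y, (ds y)⁻¹ • mulPair23 (B := B) (n x y) := by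
  simp [counitR, LinearMap.sum_apply]

lemma proj_apply' (e : H → B) (mm : T1 H B) (x : H) :
    proj e mm x =
      TensorProduct.map (LinearMap.mulRight ℂ (e x)) (LinearMap.mulLeft ℂ (e x)) (mm x) := rfl

lemma lact_apply' (b : B) (mm : T1 H B) (x : H) :
    lact b mm x = TensorProduct.map (LinearMap.mulLeft ℂ b) LinearMap.id (mm x) := rfl

lemma ract_apply' (b : B) (mm : T1 H B) (x : H) :
    ract b mm x = TensorProduct.map LinearMap.id (LinearMap.mulRight ℂ b) (mm x) := rfl

lemma lact2_apply' (b : B) (n : T2 H B) (x y : H) :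
    lact2 b n x y = TensorProduct.map (LinearMap.mulLeft ℂ b) LinearMap.id (n x y) := rfl

lemma ract2_apply' (b : B) (n : T2 H B) (x y : H) :
    ract2 b n x y =
      TensorProduct.map LinearMap.id
        (TensorProduct.map LinearMap.id (LinearMap.mulRight ℂ b)) (n x y) := rfl

lemma unit_apply' (ms : H → ℂ) (m : H → H → ℕ) (bb Bb : ∀ u v : H, Fin (m u v) → B)
    (c : B) (v : H) :
    unit ms m bb Bb c v = ∑ u, ∑ i, (ms v)⁻¹ • ((c * Bb u v i) ⊗ₜ[ℂ] bb u v i) := by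
  simp [unit, LinearMap.sum_apply, TensorProduct.mk_apply]

lemma unitL_apply' (ms : H → ℂ) (m : H → H → ℕ) (bb Bb : ∀ u v : H, Fin (m u v) → B)
    (mm : T1 H B) (v x : H) :
    unitL ms m bb Bb mm v x = ∑ u, ∑ i, (ms v)⁻¹ •
      (Bb u v i ⊗ₜ[ℂ]
        (TensorProduct.map (LinearMap.mulLeft ℂ (bb u v i)) LinearMap.id (mm x))) := by
  simp [unitL, LinearMap.sum_apply, TensorProduct.mk_apply]

lemma unitR_apply' (ms : H → ℂ) (m : H → H → ℕ) (bb Bb : ∀ u v : H, Fin (m u v) → B)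
    (mm : T1 H B) (x v : H) :
    unitR ms m bb Bb mm x v = ∑ u, ∑ i, (ms v)⁻¹ •
      (TensorProduct.map LinearMap.id
        (((TensorProduct.mk ℂ B B).flip (bb u v i)) ∘ₗ
          LinearMap.mulRight ℂ (Bb u v i)) (mm x)) := by
  simp [unitR, LinearMap.sum_apply]

/-! ### Pure-tensor computations -/

lemma trPair12_tmul' (tr : B →ₗ[ℂ] ℂ) (a c b : B) :
    trPair12 tr (a ⊗ₜ[ℂ] (c ⊗ₜ[ℂ] b)) = tr c • (a ⊗ₜ[ℂ] b) := by
  simp [trPair12, TensorProduct.lid_tmul]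

lemma trQuad2_tmul (tr : B →ₗ[ℂ] ℂ) (a c : B) (t : B ⊗[ℂ] B) :
    trQuad2 tr (a ⊗ₜ[ℂ] (c ⊗ₜ[ℂ] t)) = tr c • (a ⊗ₜ[ℂ] t) := by
  simp [trQuad2, TensorProduct.lid_tmul]

lemma trQuad3_tmul (tr : B →ₗ[ℂ] ℂ) (a c d b : B) :
    trQuad3 tr (a ⊗ₜ[ℂ] (c ⊗ₜ[ℂ] (d ⊗ₜ[ℂ] b))) =
      tr d • (a ⊗ₜ[ℂ] (c ⊗ₜ[ℂ] b)) := by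
  simp [trQuad3, TensorProduct.lid_tmul, TensorProduct.tmul_smul]

lemma ins_tmul (e : H → B) (x : H) (a b : B) :
    ins e x (a ⊗ₜ[ℂ] b) = a ⊗ₜ[ℂ] (e x ⊗ₜ[ℂ] b) := by
  simp [ins]

lemma ins1_tmul (e : H → B) (x : H) (a : B) (t : B ⊗[ℂ] B) :
    ins1 e x (a ⊗ₜ[ℂ] t) = a ⊗ₜ[ℂ] (e x ⊗ₜ[ℂ] t) := by
  simp [ins1]

lemma ins2_tmul (e : H → B) (x : H) (a c b : B) :
    ins2 e x (a ⊗ₜ[ℂ] (c ⊗ₜ[ℂ] b)) = a ⊗ₜ[ℂ] (c ⊗ₜ[ℂ] (e x ⊗ₜ[ℂ] b)) := by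
  simp [ins2]

lemma mulPair12_tmul (a c b : B) :
    mulPair12 (B := B) (a ⊗ₜ[ℂ] (c ⊗ₜ[ℂ] b)) = (a * c) ⊗ₜ[ℂ] b := by
  simp [mulPair12]

lemma mulPair23_tmul (a c b : B) :
    mulPair23 (B := B) (a ⊗ₜ[ℂ] (c ⊗ₜ[ℂ] b)) = a ⊗ₜ[ℂ] (c * b) := by
  simp [mulPair23]

/-! ### Extensionality helpers -/

private lemma ext3 {M : Type*} [AddCommMonoid M] [Module ℂ M]
    {f g : B ⊗[ℂ] (B ⊗[ℂ] B) →ₗ[ℂ] M}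
    (h : ∀ a c b : B, f (a ⊗ₜ (c ⊗ₜ b)) = g (a ⊗ₜ (c ⊗ₜ b))) : f = g := by
  apply TensorProduct.ext'
  intro a t
  induction t using TensorProduct.induction_on with
  | zero => rw [TensorProduct.tmul_zero, map_zero, map_zero]
  | tmul c b => exact h a c b
  | add s t hs ht => rw [TensorProduct.tmul_add, map_add, map_add, hs, ht]

private lemma ext4 {M : Type*} [AddCommMonoid M] [Module ℂ M]
    {f g : B ⊗[ℂ] (B ⊗[ℂ] (B ⊗[ℂ] B)) →ₗ[ℂ] M}
    (h : ∀ a c d b : B, f (a ⊗ₜ (c ⊗ₜ (d ⊗ₜ b))) = g (a ⊗ₜ (c ⊗ₜ (d ⊗ₜ b)))) :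
    f = g := by
  apply TensorProduct.ext'
  intro a t
  induction t using TensorProduct.induction_on with
  | zero => rw [TensorProduct.tmul_zero, map_zero, map_zero]
  | add s t hs ht => rw [TensorProduct.tmul_add, map_add, map_add, hs, ht]
  | tmul c s =>
    induction s using TensorProduct.induction_on with
    | zero => rw [TensorProduct.tmul_zero, TensorProduct.tmul_zero, map_zero, map_zero]
    | tmul d b => exact h a c d b
    | add s t hs ht =>
      rw [TensorProduct.tmul_add c, TensorProduct.tmul_add, map_add, map_add, hs, ht]

/-! ### Key linear-map identities -/

lemma K1 (tr : B →ₗ[ℂ] ℂ) :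
    (trPair12 tr).comp (trQuad2 tr) = (trPair12 tr).comp (trQuad3 tr) := by
  refine ext4 fun a c d b => ?_
  simp [trQuad2_tmul, trQuad3_tmul, trPair12_tmul', map_smul, smul_smul, mul_comm]

lemma K2 (tr : B →ₗ[ℂ] ℂ) (e : H → B) (x : H) :
    (trQuad3 tr).comp (ins1 e x) = (ins e x).comp (trPair12 tr) := by
  refine ext3 fun a c b => ?_
  simp [ins1_tmul, ins_tmul, trQuad3_tmul, trPair12_tmul', map_smul]

lemma K3 (tr : B →ₗ[ℂ] ℂ) (e : H → B) (x : H) :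
    (trQuad2 tr).comp (ins2 e x) = (ins e x).comp (trPair12 tr) := by
  refine ext3 fun a c b => ?_
  simp [ins2_tmul, ins_tmul, trQuad2_tmul, trPair12_tmul', map_smul]

lemma K6 (e : H → B) (x : H) :
    (ins1 e x).comp (ins e x) = (ins2 e x).comp (ins e x) := by
  refine TensorProduct.ext' fun a b => ?_
  simp [ins_tmul, ins1_tmul, ins2_tmul]

lemma K7 (tr : B →ₗ[ℂ] ℂ) (b : B) :
    (trPair12 tr).comp (TensorProduct.map (LinearMap.mulLeft ℂ b) LinearMap.id) =
      (TensorProduct.map (LinearMap.mulLeft ℂ b) LinearMap.id).comp (trPair12 tr) := by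
  refine ext3 fun a c d => ?_
  simp [trPair12_tmul', map_smul]

lemma K8 (tr : B →ₗ[ℂ] ℂ) (b : B) :
    (trPair12 tr).comp
        (TensorProduct.map LinearMap.id
          (TensorProduct.map LinearMap.id (LinearMap.mulRight ℂ b))) =
      (TensorProduct.map LinearMap.id (LinearMap.mulRight ℂ b)).comp (trPair12 tr) := by
  refine ext3 fun a c d => ?_
  simp [trPair12_tmul', map_smul]

end Aux

/-- let `B` be a finite-dimensional Frobenius ℂ-algebra with
complete orthogonal idempotents `{e_x}` whose Nakayama automorphism fixes each
`e_x`, and let `{b_{i,v,u}} ⊆ e_v B e_u`, `{b^{i,u,v}} ⊆ e_u B e_v` be dual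
bases with respect to the trace.  Then `M = ⊕_x B e_x ⊗ e_x B` with the
multiplication `μ_M`, unit `ι_M`, comultiplication `δ_M` and counit `ε_M`
defined above is a Frobenius algebra object in the monoidal category of
`B`-`B`-bimodules (stated in the concrete model of `M ⊗_B M`). -/
theorem stmt_15 [FiniteDimensional ℂ B]
    (e : H → B)
    (horth : ∀ x y, e x * e y = if x = y then e x else 0)
    (hcomplete : ∑ x, e x = 1)
    (tr : B →ₗ[ℂ] ℂ)
    (hnd : ∀ a : B, (∀ b : B, tr (a * b) = 0) → a = 0)
    (htr0 : ∀ (x y : H) (b : B), x ≠ y → tr (e x * b * e y) = 0)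
    (m : H → H → ℕ) (bb Bb : ∀ u v : H, Fin (m u v) → B)
    (hbb : ∀ u v i, e v * bb u v i * e u = bb u v i)
    (hBb : ∀ u v i, e u * Bb u v i * e v = Bb u v i)
    (hdual : ∀ u v i j, tr (bb u v i * Bb u v j) = if i = j then 1 else 0)
    (hspan1 : ∀ (u v : H) (a : B),
      e u * a * e v = ∑ i, tr (bb u v i * (e u * a * e v)) • Bb u v i)
    (hspan2 : ∀ (u v : H) (a : B),
      e v * a * e u = ∑ i, tr ((e v * a * e u) * Bb u v i) • bb u v i)
    (ds ms : H → ℂ) (hds : ∀ x, ds x ≠ 0) (hms : ∀ x, ms x ≠ 0) :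
    -- associativity of μ_M
    (∀ n : T3 H B, mul tr ms (mulL tr ms n) = mul tr ms (mulR tr ms n)) ∧
    -- unitality of ι_M, on the bimodule M (the fixed points of `proj e`)
    (∀ mm : T1 H B, proj e mm = mm →
      mul tr ms (unitL ms m bb Bb mm) = mm ∧
      mul tr ms (unitR ms m bb Bb mm) = mm) ∧
    -- coassociativity of δ_M
    (∀ mm : T1 H B, comulL e ds (comul e ds mm) = comulR e ds (comul e ds mm)) ∧
    -- counitality of ε_M
    (∀ mm : T1 H B, proj e mm = mm →
      counitL ds (comul e ds mm) = mm ∧ counitR ds (comul e ds mm) = mm) ∧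
    -- the Frobenius conditions (id ⊗ μ)(δ ⊗ id) = δ ∘ μ = (μ ⊗ id)(id ⊗ δ)
    (∀ n : T2 H B, mulR tr ms (comulL e ds n) = comul e ds (mul tr ms n)) ∧
    (∀ n : T2 H B, mulL tr ms (comulR e ds n) = comul e ds (mul tr ms n)) ∧
    -- μ_M and ι_M are morphisms of B-B-bimodules
    (∀ (b : B) (n : T2 H B), mul tr ms (lact2 b n) = lact b (mul tr ms n)) ∧
    (∀ (b : B) (n : T2 H B), mul tr ms (ract2 b n) = ract b (mul tr ms n)) ∧
    (∀ b c : B, unit ms m bb Bb (b * c) = lact b (unit ms m bb Bb c)) ∧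
    (∀ b c : B, unit ms m bb Bb (c * b) = ract b (unit ms m bb Bb c)) := by
  classical
  have idem : ∀ x, e x * e x = e x := fun x => by simpa using horth x x
  have bbr : ∀ u v i, bb u v i * e u = bb u v i := by
    intro u v i
    conv_lhs => rw [← hbb u v i]
    rw [mul_assoc (e v * bb u v i), idem, hbb]
  have bbl : ∀ u v i, e v * bb u v i = bb u v i := by
    intro u v i
    conv_lhs => rw [← hbb u v i]
    rw [← mul_assoc, ← mul_assoc, idem, hbb]
  have Bbl : ∀ u v i, e u * Bb u v i = Bb u v i := by
    intro u v i
    conv_lhs => rw [← hBb u v i]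
    rw [← mul_assoc, ← mul_assoc, idem, hBb]
  have Bbr : ∀ u v i, Bb u v i * e v = Bb u v i := by
    intro u v i
    conv_lhs => rw [← hBb u v i]
    rw [mul_assoc (e u * Bb u v i), idem, hBb]
  have span1' : ∀ (w v : H) (z : B), z * e v = z →
      e w * z = ∑ j, tr (bb w v j * z) • Bb w v j := by
    intro w v z hz
    have h := hspan1 w v z
    rw [mul_assoc, hz] at h
    rw [h]
    refine Finset.sum_congr rfl fun j _ => ?_
    rw [← mul_assoc, bbr]
  have span2' : ∀ (u v : H) (z : B), e v * z = z →
      z * e u = ∑ i, tr (z * Bb u v i) • bb u v i := by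
    intro u v z hz
    have h := hspan2 u v z
    rw [hz] at h
    rw [h]
    refine Finset.sum_congr rfl fun i _ => ?_
    rw [mul_assoc, Bbl]
  have sumspan1 : ∀ (x : H) (a : B),
      ∑ u, ∑ i, tr (bb u x i * (a * e x)) • Bb u x i = a * e x := by
    intro x a
    have hz : (a * e x) * e x = a * e x := by rw [mul_assoc, idem]
    have h : ∀ u, ∑ i, tr (bb u x i * (a * e x)) • Bb u x i = e u * (a * e x) :=
      fun u => (span1' u x _ hz).symm
    rw [Finset.sum_congr rfl fun u _ => h u, ← Finset.sum_mul, hcomplete, one_mul]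
  have sumspan2 : ∀ (x : H) (b : B),
      ∑ u, ∑ i, tr ((e x * b) * Bb u x i) • bb u x i = e x * b := by
    intro x b
    have hz : e x * (e x * b) = e x * b := by rw [← mul_assoc, idem]
    have h : ∀ u, ∑ i, tr ((e x * b) * Bb u x i) • bb u x i = (e x * b) * e u :=
      fun u => (span2' u x _ hz).symm
    rw [Finset.sum_congr rfl fun u _ => h u, ← Finset.mul_sum, hcomplete, mul_one]
  have casimir : ∀ (v : H) (b : B),
      ∑ u, ∑ i, (b * Bb u v i) ⊗ₜ[ℂ] bb u v i
        = ∑ u, ∑ i, Bb u v i ⊗ₜ[ℂ] (bb u v i * b) := by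
    intro v b
    have hL : ∀ u i, (b * Bb u v i) ⊗ₜ[ℂ] bb u v i
        = ∑ w, ∑ j, tr (bb w v j * (b * Bb u v i)) • (Bb w v j ⊗ₜ[ℂ] bb u v i) := by
      intro u i
      have hz : (b * Bb u v i) * e v = b * Bb u v i := by rw [mul_assoc, Bbr]
      have hdec : b * Bb u v i = ∑ w, e w * (b * Bb u v i) := by
        rw [← Finset.sum_mul, hcomplete, one_mul]
      conv_lhs => rw [hdec]
      rw [TensorProduct.sum_tmul]
      refine Finset.sum_congr rfl fun w _ => ?_
      conv_lhs => rw [span1' w v _ hz]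
      rw [TensorProduct.sum_tmul]
      exact Finset.sum_congr rfl fun j _ => TensorProduct.smul_tmul' _ _ _
    have hR : ∀ w j, Bb w v j ⊗ₜ[ℂ] (bb w v j * b)
        = ∑ u, ∑ i, tr (bb w v j * (b * Bb u v i)) • (Bb w v j ⊗ₜ[ℂ] bb u v i) := by
      intro w j
      have hz : e v * (bb w v j * b) = bb w v j * b := by rw [← mul_assoc, bbl]
      have hdec : bb w v j * b = ∑ u, (bb w v j * b) * e u := by
        rw [← Finset.mul_sum, hcomplete, mul_one]
      conv_lhs => rw [hdec]
      rw [TensorProduct.tmul_sum]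
      refine Finset.sum_congr rfl fun u _ => ?_
      conv_lhs => rw [span2' u v _ hz]
      rw [TensorProduct.tmul_sum]
      refine Finset.sum_congr rfl fun i _ => ?_
      rw [TensorProduct.tmul_smul, mul_assoc]
    calc ∑ u, ∑ i, (b * Bb u v i) ⊗ₜ[ℂ] bb u v i
        = ∑ u, ∑ i, ∑ w, ∑ j,
            tr (bb w v j * (b * Bb u v i)) • (Bb w v j ⊗ₜ[ℂ] bb u v i) := by
          exact Finset.sum_congr rfl fun u _ => Finset.sum_congr rfl fun i _ => hL u i
      _ = ∑ w, ∑ j, ∑ u, ∑ i,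
            tr (bb w v j * (b * Bb u v i)) • (Bb w v j ⊗ₜ[ℂ] bb u v i) := by
          calc ∑ u, ∑ i : Fin (m u v), ∑ w, ∑ j : Fin (m w v),
                  tr (bb w v j * (b * Bb u v i)) • (Bb w v j ⊗ₜ[ℂ] bb u v i)
              = ∑ u, ∑ w, ∑ i : Fin (m u v), ∑ j : Fin (m w v),
                  tr (bb w v j * (b * Bb u v i)) • (Bb w v j ⊗ₜ[ℂ] bb u v i) :=
                Finset.sum_congr rfl fun u _ => Finset.sum_comm
            _ = ∑ w, ∑ u, ∑ i : Fin (m u v), ∑ j : Fin (m w v),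
                  tr (bb w v j * (b * Bb u v i)) • (Bb w v j ⊗ₜ[ℂ] bb u v i) :=
                Finset.sum_comm
            _ = ∑ w, ∑ u, ∑ j : Fin (m w v), ∑ i : Fin (m u v),
                  tr (bb w v j * (b * Bb u v i)) • (Bb w v j ⊗ₜ[ℂ] bb u v i) :=
                Finset.sum_congr rfl fun w _ => Finset.sum_congr rfl fun u _ =>
                  Finset.sum_comm
            _ = ∑ w, ∑ j : Fin (m w v), ∑ u, ∑ i : Fin (m u v),
                  tr (bb w v j * (b * Bb u v i)) • (Bb w v j ⊗ₜ[ℂ] bb u v i) :=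
                Finset.sum_congr rfl fun w _ => Finset.sum_comm
      _ = ∑ w, ∑ j, Bb w v j ⊗ₜ[ℂ] (bb w v j * b) :=
          (Finset.sum_congr rfl fun w _ => Finset.sum_congr rfl fun j _ => (hR w j).symm)
  have keyL : ∀ (x : H) (s : B ⊗[ℂ] B),
      ∑ u, ∑ i, trPair12 tr (Bb u x i ⊗ₜ[ℂ]
          (TensorProduct.map (LinearMap.mulLeft ℂ (bb u x i)) LinearMap.id
            (TensorProduct.map (LinearMap.mulRight ℂ (e x)) (LinearMap.mulLeft ℂ (e x)) s)))
        = TensorProduct.map (LinearMap.mulRight ℂ (e x)) (LinearMap.mulLeft ℂ (e x)) s := by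
    intro x s
    induction s using TensorProduct.induction_on with
    | zero => simp
    | add s t hs ht =>
      simp only [map_add, TensorProduct.tmul_add, Finset.sum_add_distrib, hs, ht]
    | tmul a b =>
      simp only [TensorProduct.map_tmul, LinearMap.mulRight_apply, LinearMap.mulLeft_apply,
        LinearMap.id_coe, id_eq, trPair12_tmul']
      simp_rw [TensorProduct.smul_tmul', ← TensorProduct.sum_tmul]
      rw [sumspan1]
  have keyR : ∀ (x : H) (s : B ⊗[ℂ] B),
      ∑ u, ∑ i, trPair12 tr
          (TensorProduct.map LinearMap.id
            (((TensorProduct.mk ℂ B B).flip (bb u x i)) ∘ₗ LinearMap.mulRight ℂ (Bb u x i))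
            (TensorProduct.map (LinearMap.mulRight ℂ (e x)) (LinearMap.mulLeft ℂ (e x)) s))
        = TensorProduct.map (LinearMap.mulRight ℂ (e x)) (LinearMap.mulLeft ℂ (e x)) s := by
    intro x s
    induction s using TensorProduct.induction_on with
    | zero => simp
    | add s t hs ht =>
      simp only [map_add, Finset.sum_add_distrib, hs, ht]
    | tmul a b =>
      simp only [TensorProduct.map_tmul, LinearMap.mulRight_apply, LinearMap.mulLeft_apply,
        LinearMap.id_coe, id_eq, LinearMap.comp_apply, LinearMap.flip_apply,
        TensorProduct.mk_apply, trPair12_tmul']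
      simp_rw [← TensorProduct.tmul_smul, ← TensorProduct.tmul_sum]
      rw [sumspan2]
  have keyC12 : ∀ (y : H) (s : B ⊗[ℂ] B),
      mulPair12 (B := B) (ins e y
          (TensorProduct.map (LinearMap.mulRight ℂ (e y)) (LinearMap.mulLeft ℂ (e y)) s))
        = TensorProduct.map (LinearMap.mulRight ℂ (e y)) (LinearMap.mulLeft ℂ (e y)) s := by
    intro y s
    induction s using TensorProduct.induction_on with
    | zero => simp
    | add s t hs ht => simp only [map_add, hs, ht]
    | tmul a b =>
      simp only [TensorProduct.map_tmul, LinearMap.mulRight_apply, LinearMap.mulLeft_apply,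
        ins_tmul, mulPair12_tmul]
      rw [mul_assoc, idem]
  have keyC23 : ∀ (y : H) (s : B ⊗[ℂ] B),
      mulPair23 (B := B) (ins e y
          (TensorProduct.map (LinearMap.mulRight ℂ (e y)) (LinearMap.mulLeft ℂ (e y)) s))
        = TensorProduct.map (LinearMap.mulRight ℂ (e y)) (LinearMap.mulLeft ℂ (e y)) s := by
    intro y s
    induction s using TensorProduct.induction_on with
    | zero => simp
    | add s t hs ht => simp only [map_add, hs, ht]
    | tmul a b =>
      simp only [TensorProduct.map_tmul, LinearMap.mulRight_apply, LinearMap.mulLeft_apply,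
        ins_tmul, mulPair23_tmul]
      rw [← mul_assoc, idem]
  refine ⟨?_, ?_, ?_, ?_, ?_, ?_, ?_, ?_, ?_, ?_⟩
  · -- associativity
    intro n; funext x
    rw [mul_apply', mul_apply', mulL_apply', mulR_apply', map_smul, map_smul]
    have h := LinearMap.congr_fun (K1 (B := B) tr) (n x x x)
    simp only [LinearMap.comp_apply] at h
    rw [h]
  · -- unitality
    intro mm hmm
    have hfix : ∀ x, TensorProduct.map (LinearMap.mulRight ℂ (e x))
        (LinearMap.mulLeft ℂ (e x)) (mm x) = mm x := fun x => congrFun hmm x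
    constructor
    · funext x
      rw [mul_apply', unitL_apply']
      simp only [map_sum, map_smul, Finset.smul_sum, smul_smul,
        mul_inv_cancel₀ (hms x), one_smul]
      have h2 := keyL x (mm x)
      rw [hfix x] at h2
      exact h2
    · funext x
      rw [mul_apply', unitR_apply']
      simp only [map_sum, map_smul, Finset.smul_sum, smul_smul,
        mul_inv_cancel₀ (hms x), one_smul]
      have h2 := keyR x (mm x)
      rw [hfix x] at h2
      exact h2
  · -- coassociativity
    intro mm; funext p q r
    rw [comulL_apply', comulR_apply', comul_apply', comul_apply']
    rcases eq_or_ne p q with hpq | hpq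
    · subst hpq
      rcases eq_or_ne p r with hpr | hpr
      · subst hpr
        have h := LinearMap.congr_fun (K6 (B := B) e p) (mm p)
        simp only [LinearMap.comp_apply] at h
        simp only [if_pos rfl, if_true, eq_self_iff_true, map_smul, h]
      · simp [hpr, Ne.symm hpr]
    · rcases eq_or_ne q r with hqr | hqr
      · simp [hpq]
      · simp [hpq, hqr]
  · -- counitality
    intro mm hmm
    have hfix : ∀ x, TensorProduct.map (LinearMap.mulRight ℂ (e x))
        (LinearMap.mulLeft ℂ (e x)) (mm x) = mm x := fun x => congrFun hmm x
    constructor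
    · funext y
      rw [counitL_apply',
        Finset.sum_eq_single_of_mem y (Finset.mem_univ y)
          (fun x _ hxy => by rw [comul_apply', if_neg hxy, map_zero, smul_zero]),
        comul_apply', if_pos rfl, map_smul, smul_smul, inv_mul_cancel₀ (hds y), one_smul]
      have h2 := keyC12 y (mm y)
      rw [hfix y] at h2
      exact h2
    · funext x
      rw [counitR_apply',
        Finset.sum_eq_single_of_mem x (Finset.mem_univ x)
          (fun y _ hxy => by rw [comul_apply', if_neg (Ne.symm hxy), map_zero, smul_zero]),
        comul_apply', if_pos rfl, map_smul, smul_smul, inv_mul_cancel₀ (hds x), one_smul]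
      have h2 := keyC23 x (mm x)
      rw [hfix x] at h2
      exact h2
  · -- Frobenius 1
    intro n; funext p q
    rw [mulR_apply', comulL_apply', comul_apply', mul_apply']
    rcases eq_or_ne p q with h | h
    · subst h
      rw [if_pos rfl, if_pos rfl]
      have hk := LinearMap.congr_fun (K2 (B := B) tr e p) (n p p)
      simp only [LinearMap.comp_apply] at hk
      rw [map_smul, hk, map_smul]
      exact smul_comm _ _ _
    · rw [if_neg h, if_neg h, map_zero, smul_zero]
  · -- Frobenius 2
    intro n; funext p q
    rw [mulL_apply', comulR_apply', comul_apply', mul_apply']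
    rcases eq_or_ne p q with h | h
    · subst h
      rw [if_pos rfl, if_pos rfl]
      have hk := LinearMap.congr_fun (K3 (B := B) tr e p) (n p p)
      simp only [LinearMap.comp_apply] at hk
      rw [map_smul, hk, map_smul]
      exact smul_comm _ _ _
    · rw [if_neg h, if_neg h, map_zero, smul_zero]
  · -- left action
    intro b n; funext x
    rw [mul_apply', lact_apply', mul_apply', lact2_apply']
    have h := LinearMap.congr_fun (K7 (B := B) tr b) (n x x)
    simp only [LinearMap.comp_apply] at h
    rw [h, map_smul]
  · -- right action
    intro b n; funext x
    rw [mul_apply', ract_apply', mul_apply', ract2_apply']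
    have h := LinearMap.congr_fun (K8 (B := B) tr b) (n x x)
    simp only [LinearMap.comp_apply] at h
    rw [h, map_smul]
  · -- unit, left action
    intro b c; funext v
    rw [unit_apply', lact_apply', unit_apply', map_sum]
    refine Finset.sum_congr rfl fun u _ => ?_
    rw [map_sum]
    refine Finset.sum_congr rfl fun i _ => ?_
    rw [map_smul, TensorProduct.map_tmul]
    simp [mul_assoc]
  · -- unit, right action
    intro b c; funext v
    rw [unit_apply', ract_apply', unit_apply']
    have hc := congrArg (TensorProduct.map (LinearMap.mulLeft ℂ c) LinearMap.id) (casimir v b)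
    simp only [map_sum, TensorProduct.map_tmul, LinearMap.mulLeft_apply,
      LinearMap.id_coe, id_eq] at hc
    simp only [map_sum, map_smul, TensorProduct.map_tmul, LinearMap.mulRight_apply,
      LinearMap.id_coe, id_eq, mul_assoc]
    simp_rw [← Finset.smul_sum]
    rw [hc]


end Stmt15

end
end

section
/- Let H be a finite set with involution w ↦ w^{-1} and fixed element d = d^{-1}, and let h, γ satisfy the Lusztig axioms: ∑_z h(x₁,x₂,z)γ(z,x₃,y^{-1}) = ∑_z h(x₁,z,y)γ(x₂,x₃,z^{-1}); h(a,b,c) = h(b^{-1},a^{-1},c^{-1}); γ(a,b,c) = γ(b^{-1},a^{-1},c^{-1}) = γ(c,a,b); γ(v,u,d) = δ_{v,u^{-1}}, where h takes values in Laurent polynomials ℂ[v,v^{-1}] ⊆ ℂ(v) and γ in ℂ. Suppose moreover that the matrix (h(x^{-1}, w, d))_{x,w ∈ H} is invertible over ℂ(v). Then for each fixed pair (w,u) ∈ H × H, the family (c_v)_{v ∈ H} := (γ(w, v, u^{-1}))_{v ∈ H} is the unique family of elements of ℂ(v) satisfying ∑_{v ∈ H} h(x^{-1}, v, d) · c_v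 = h(w, x, u) for all x ∈ H. -/
/-- combining the Lusztig identity with invertibility of the
matrix (h(x⁻¹,w,d)) over ℂ(v), for each (w,u) the family γ(w,·,u⁻¹) is the
unique solution of the linear system ∑_v h(x⁻¹,v,d)·c_v = h(w,x,u). -/
theorem stmt_17 {H : Type*} [Fintype H] [DecidableEq H]
    (inv : H → H) (hinv : ∀ w, inv (inv w) = w) (d : H) (hd : inv d = d)
    (h : H → H → H → RatFunc ℂ) (γ : H → H → H → ℂ)
    (hLu : ∀ x1 x2 x3 y, ∑ z, h x1 x2 z * algebraMap ℂ (RatFunc ℂ) (γ z x3 (inv y))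
        = ∑ z, h x1 z y * algebraMap ℂ (RatFunc ℂ) (γ x2 x3 (inv z)))
    (hsymh : ∀ a b c, h a b c = h (inv b) (inv a) (inv c))
    (hsymγ : ∀ a b c, γ a b c = γ (inv b) (inv a) (inv c))
    (hcyc : ∀ a b c, γ a b c = γ c a b)
    (hdel : ∀ v u, γ v u d = if v = inv u then 1 else 0)
    (hM : IsUnit (Matrix.of (fun x w => h (inv x) w d) : Matrix H H (RatFunc ℂ))) :
    ∀ w u : H,
      (∀ x, ∑ v, h (inv x) v d * algebraMap ℂ (RatFunc ℂ) (γ w v (inv u))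
          = h w x u) ∧
      ∀ c : H → RatFunc ℂ,
        (∀ x, ∑ v, h (inv x) v d * c v = h w x u) →
          c = fun v => algebraMap ℂ (RatFunc ℂ) (γ w v (inv u)) := by
  intro w u
  have key : ∀ x, ∑ v, h (inv x) v d * algebraMap ℂ (RatFunc ℂ) (γ w v (inv u))
      = h w x u := by
    intro x
    have hL := hLu (inv x) (inv w) u d
    rw [hd] at hL
    have lhs : ∑ z, h (inv x) (inv w) z * algebraMap ℂ (RatFunc ℂ) (γ z u d)
        = h (inv x) (inv w) (inv u) := by
      rw [Finset.sum_eq_single (inv u)]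
      · rw [hdel]; simp
      · intro b _ hb; rw [hdel, if_neg hb]; simp
      · simp
    have hgam : ∀ v, γ w v (inv u) = γ (inv w) u (inv v) := by
      intro v
      rw [hsymγ w v (inv u), hinv, hcyc, hcyc]
    rw [lhs] at hL
    rw [hsymh w x u, hL]
    exact Finset.sum_congr rfl fun v _ => by rw [hgam v]
  refine ⟨key, fun c hc => ?_⟩
  have hinj : Function.Injective
      (Matrix.of (fun x w => h (inv x) w d) : Matrix H H (RatFunc ℂ)).mulVec :=
    Matrix.mulVec_injective_iff_isUnit.2 hM
  have : (Matrix.of (fun x w => h (inv x) w d) : Matrix H H (RatFunc ℂ)).mulVec c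
      = (Matrix.of (fun x w => h (inv x) w d)).mulVec
        (fun v => algebraMap ℂ (RatFunc ℂ) (γ w v (inv u))) := by
    funext x
    simp only [Matrix.mulVec, dotProduct, Matrix.of_apply]
    rw [hc x, key x]
  exact hinj this
end
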